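/- For every integer h' ≥ 1 there exists a polynomial f_{h'} ∈ ℚ[x] of degree h'−1 with leading coefficient 1/(2h')!! such that for all n ≥ h'+1 one has X̃_n(h') = (n−h')·n!·f_{h'}(n) (as rational numbers); moreover X̃_n(0) = n! for all n ≥ 1. -/

import Mathlib

/-- Refined counting numbers `Xtab n h p`: `Xtab 1 2 0 = 1`, zero off `(2,0)` at `n = 1`, and
`Xtab n h p = (2n+1-h)·(Xtab (n-1) (h-2) p + Xtab (n-1) (h-1) p) + 2(h-1-n)·Xtab (n-1) (h-1) (p-1)`
for `n ≥ 2`.  `Xtab n h p` counts generalized tree-like tableaux of size `n`, half-perimeter `h`,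
with exactly `p` off-diagonal points attached to a diagonal point. -/
def Xtab : ℕ → ℤ → ℤ → ℤ
  | 0, _, _ => 0
  | 1, h, p => if h = 2 ∧ p = 0 then 1 else 0
  | n + 2, h, p =>
      (2 * ((n : ℤ) + 2) + 1 - h) * (Xtab (n + 1) (h - 2) p + Xtab (n + 1) (h - 1) p)
        + 2 * (h - 1 - ((n : ℤ) + 2)) * Xtab (n + 1) (h - 1) (p - 1)

/-!
At `p = 0` the term with `p - 1` vanishes, so `X̃_{n+1}(h) = (n + 1 - h)(X̃_n(h - 1) + X̃_n(h))`,
and `X̃_n(h) = 0` unless `0 ≤ h < n`. Writing `X̃_n(h) = n! g_h(n)`, the recurrence becomes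
`x g_{h+1}(x) - (x - c) g_{h+1}(x - 1) = (x - c) g_h(x - 1)` with `c = h + 1`. The operator
`F ↦ x F(x) - (x - c) F(x - 1)` has the shifted falling factorials
`(x - c)(x - c - 1)⋯(x - c - k + 1)` as eigenvectors, with eigenvalues `c + k ≠ 0`, so a
right-hand side of degree `k` has a polynomial solution of degree `k`, whose leading coefficient
is that of the right-hand side divided by `c + k`. Starting from `g_0 = 1` this gives
`deg g_h = h` with leading coefficient `1/(2h)!!`. Finally `X̃_h(h) = 0` makes `h` a root of
`g_h`, and `f_h = g_h / (x - h)`.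
-/

open Polynomial Nat

theorem Xtab_eq_zero {n : ℕ} {h p : ℤ} (H : p < 0 ∨ h ≤ n ∨ 2 * n < h) :
    Xtab n h p = 0 := by
  induction n, h, p using Xtab.induct with
  | case1 => rfl
  | case2 h p hhp => push_cast at H; omega
  | case3 h p hhp => simp [Xtab, hhp]
  | case4 n h p ih₁ ih₂ ih₃ =>
    push_cast at H
    rw [Xtab, ih₁ (by push_cast; omega), ih₂ (by push_cast; omega), ih₃ (by push_cast; omega)]
    ring

-- `h` is an integer so that `Xtilde_succ` also covers `h = 0`, where `X̃_n(-1) = 0` enters.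
def Xtilde (n : ℕ) (h : ℤ) : ℤ := Xtab n (n + 1 + h) 0

theorem Xtilde_succ {n : ℕ} (hn : 1 ≤ n) (h : ℤ) :
    Xtilde (n + 1) h = (n + 1 - h) * (Xtilde n (h - 1) + Xtilde n h) := by
  obtain ⟨m, rfl⟩ := Nat.exists_eq_add_of_le' hn
  rw [Xtilde, Xtilde, Xtilde, Xtab, Xtab_eq_zero (p := 0 - 1) (Or.inl (by norm_num))]
  push_cast
  ring_nf

theorem Xtilde_of_neg {n : ℕ} {h : ℤ} (hh : h < 0) : Xtilde n h = 0 :=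
  Xtab_eq_zero (Or.inr (Or.inl (by omega)))

theorem Xtilde_of_le {n : ℕ} {h : ℤ} (hh : n ≤ h) : Xtilde n h = 0 :=
  Xtab_eq_zero (Or.inr (Or.inr (by omega)))

theorem Xtilde_zero {n : ℕ} (hn : 1 ≤ n) : Xtilde n 0 = n ! := by
  induction n, hn using Nat.le_induction with
  | base => decide
  | succ n hn ih =>
    rw [Xtilde_succ hn, ih, Xtilde_of_neg (by norm_num), factorial_succ]
    push_cast
    ring

theorem eval_taylor_descPochhammer_eigen {R : Type*} [CommRing R] (c x : R) (d : ℕ) :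
    x * (taylor (-c) (descPochhammer R d)).eval x
        - (x - c) * (taylor (-c) (descPochhammer R d)).eval (x - 1)
      = (c + d) * (taylor (-c) (descPochhammer R d)).eval x := by
  have h := descPochhammer_succ_eval d (x + -c)
  rw [descPochhammer_succ_left, eval_mul, eval_X, eval_comp, eval_sub, eval_X, eval_one] at h
  simp only [taylor_eval, show x - 1 + -c = x + -c - 1 by ring]
  linear_combination -h

theorem exists_eval_mul_sub_eq {K : Type*} [Field K] (c : K) (hc : ∀ k : ℕ, c + k ≠ 0)
    (g : K[X]) :
    ∃ F : K[X], F.degree = g.degree ∧ F.leadingCoeff = g.leadingCoeff / (c + g.natDegree) ∧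
      ∀ x, x * F.eval x - (x - c) * F.eval (x - 1) = g.eval x := by
  induction g using degree_lt_wf.induction with
  | _ g ih =>
  rcases eq_or_ne g 0 with rfl | hg
  · exact ⟨0, by simp⟩
  set d := g.natDegree
  set a := g.leadingCoeff
  set P := taylor (-c) (descPochhammer K d)
  have hPmonic : P.Monic := by rw [Monic, leadingCoeff_taylor]; exact monic_descPochhammer K d
  have hPdeg : P.degree = g.degree := by
    rw [degree_taylor, degree_eq_natDegree (monic_descPochhammer K d).ne_zero,
      descPochhammer_natDegree, degree_eq_natDegree hg]
  have ha : a ≠ 0 := leadingCoeff_ne_zero.mpr hg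
  -- subtract the eigenvector of top degree and recurse on the remainder
  have hlt : (g - C a * P).degree < g.degree := degree_sub_lt_left (by rw [degree_C_mul ha, hPdeg])
    hg (by rw [leadingCoeff_mul, leadingCoeff_C, hPmonic.leadingCoeff, mul_one])
  obtain ⟨F, hFdeg, -, hF⟩ := ih _ hlt
  have hlead : (C (a / (c + d)) * P).degree = g.degree := by
    rw [degree_C_mul (div_ne_zero ha (hc d)), hPdeg]
  refine ⟨C (a / (c + d)) * P + F, ?_, ?_, fun x => ?_⟩
  · rw [degree_add_eq_left_of_degree_lt (by rwa [hFdeg, hlead]), hlead]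
  · rw [leadingCoeff_add_of_degree_lt' (by rwa [hFdeg, hlead]), leadingCoeff_mul, leadingCoeff_C,
      hPmonic.leadingCoeff, mul_one]
  · have hFx := hF x
    simp only [eval_add, eval_mul, eval_C, eval_sub] at hFx ⊢
    field_simp [hc d]
    linear_combination (c + d) * hFx + a * eval_taylor_descPochhammer_eigen c x d

theorem exists_polynomial_Xtilde_eq (h : ℕ) :
    ∃ g : ℚ[X], g.natDegree = h ∧ g.leadingCoeff = 1 / (2 * h)‼ ∧
      ∀ n : ℕ, h ≤ n → 1 ≤ n → (Xtilde n h : ℚ) = n ! * g.eval (n : ℚ) := by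
  induction h with
  | zero => exact ⟨1, by simp, by simp, fun n _ hn => by simp [Xtilde_zero hn]⟩
  | succ h ih =>
  obtain ⟨g, hgdeg, hglc, hg⟩ := ih
  have hg0 : g ≠ 0 := leadingCoeff_ne_zero.mp (by rw [hglc]; positivity)
  obtain ⟨G, hGdeg, hGlc, hG⟩ := exists_eval_mul_sub_eq ((h : ℚ) + 1) (fun k => by positivity)
    ((X - C ((h : ℚ) + 1)) * taylor (-1) g)
  have hrhs : ((X - C ((h : ℚ) + 1)) * taylor (-1) g).natDegree = h + 1 := by
    rw [natDegree_mul (X_sub_C_ne_zero _) (by simpa using hg0), natDegree_X_sub_C,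
      natDegree_taylor, hgdeg, add_comm]
  refine ⟨G, by rw [natDegree_eq_of_degree_eq hGdeg, hrhs], ?_, fun n hn _ => ?_⟩
  · rw [hGlc, hrhs, leadingCoeff_mul, leadingCoeff_X_sub_C, leadingCoeff_taylor, hglc,
      show 2 * (h + 1) = 2 * h + 2 by ring, doubleFactorial_add_two]
    push_cast
    field_simp
    ring
  induction n, hn using Nat.le_induction with
  | base =>
    have hGc := hG (h + 1)
    simp only [sub_self, zero_mul, sub_zero, eval_mul, eval_sub, eval_X, eval_C] at hGc
    push_cast
    rw [Xtilde_of_le (by push_cast; exact le_rfl),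
      (mul_eq_zero.mp hGc).resolve_left (by positivity)]
    simp
  | succ n hn ihn =>
    have hGn := hG (n + 1)
    simp only [eval_mul, eval_sub, eval_X, eval_C, taylor_eval, add_neg_cancel_right,
      add_sub_cancel_right] at hGn
    rw [Xtilde_succ (by omega)]
    push_cast at ihn ⊢
    rw [add_sub_cancel_right, ihn (by omega), hg n (by omega) (by omega), factorial_succ]
    push_cast
    linear_combination -(n ! : ℚ) * hGn

/-- X̃_n(0) = n! for all n ≥ 1; and for every h' ≥ 1 there is a polynomial f_{h'} ∈ ℚ[x]
of degree h'−1 with leading coefficient 1/(2h')!! such that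
X̃_n(h') = (n−h')·n!·f_{h'}(n) for all n ≥ h'+1, where X̃_n(h') := X_n(n+1+h', 0). -/
theorem stmt14 :
    (∀ n : ℕ, 1 ≤ n → Xtab n ((n : ℤ) + 1) 0 = (Nat.factorial n : ℤ)) ∧
    ∀ h' : ℕ, 1 ≤ h' →
      ∃ f : Polynomial ℚ, f.natDegree = h' - 1 ∧
        f.leadingCoeff = 1 / (Nat.doubleFactorial (2 * h') : ℚ) ∧
        ∀ n : ℕ, h' + 1 ≤ n →
          ((Xtab n ((n : ℤ) + 1 + (h' : ℤ)) 0 : ℤ) : ℚ)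
            = ((n : ℚ) - (h' : ℚ)) * (Nat.factorial n : ℚ) * f.eval (n : ℚ) := by
  refine ⟨fun n hn => by simpa [Xtilde] using Xtilde_zero hn, fun h' hh' => ?_⟩
  obtain ⟨g, hgdeg, hglc, hg⟩ := exists_polynomial_Xtilde_eq h'
  have hroot : g.IsRoot h' := by
    have := hg h' le_rfl hh'
    rw [Xtilde_of_le le_rfl, Int.cast_zero, eq_comm] at this
    exact (mul_eq_zero.mp this).resolve_left (by positivity)
  obtain ⟨f, rfl⟩ := dvd_iff_isRoot.mpr hroot
  have hf0 : f ≠ 0 := right_ne_zero_of_mul (leadingCoeff_ne_zero.mp (by rw [hglc]; positivity))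
  rw [leadingCoeff_mul, leadingCoeff_X_sub_C, one_mul] at hglc
  rw [natDegree_mul (X_sub_C_ne_zero _) hf0, natDegree_X_sub_C] at hgdeg
  refine ⟨f, by omega, hglc, fun n hn => ?_⟩
  rw [← Xtilde, hg n (by omega) (by omega), eval_mul, eval_sub, eval_X, eval_C]
  ring
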